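/- Let 0 ≤ t ≤ n, let J = {j₁ < ⋯ < j_t} and K = {κ₁ < ⋯ < κ_t} be t-element subsets of {1,…,n}, let π be a bijection from {1,…,n}∖J onto {1,…,n}∖K, let τ be a permutation of {1,…,t}, and let ψ be a t×t complex matrix. Define the n×n complex matrix φ by: for j ∉ J, φ_{j,k} = −δ_{π(j),k} for all k; for j = j_r ∈ J, φ_{j,κ_k} = ψ_{τ(r),k} for 1 ≤ k ≤ t and φ_{j,k'} = 0 for k' ∉ K. Then det φ = (−1)^{n−t} · sgn(ρ) · sgn(τ) · det ψ, where ρ is the permutation of {1,…,n} defined by ρ(j_r) = κ_r for 1 ≤ r ≤ t and ρ(j) = π(j) for j ∉ J. (This determinant rearrangement, relating the determinant of the matrix φ built from rows that are negative standard basis vectors together with a permuted block ψ to det ψ with an explicit sign, is the content underlying Proposition 6.2.) -/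

import Mathlib

/-!
Permuting the columns of `φ` by `ρ` costs the factor `sgn ρ` and makes the matrix block
triangular for the splitting `J ⊔ Jᶜ` of rows and columns, because `ρ` maps `J` onto `K` in
order and `Jᶜ` onto `Kᶜ` via `π`. The `J`-block is `ψ` with rows permuted by `τ`, reindexed
along `J ≃ Fin t`, so its determinant is `sgn τ · det ψ`; the `Jᶜ`-block is `-1` of size
`n - t`.
-/

open Matrix Complex Finset Filter

noncomputable section

theorem Matrix.det_eq_sign_mul_det_submatrix_id {n R : Type*} [DecidableEq n] [Fintype n]
    [CommRing R] (σ : Equiv.Perm n) (M : Matrix n n R) :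
    M.det = Equiv.Perm.sign σ * (M.submatrix id σ).det := by
  rw [det_permute', ← mul_assoc, ← Int.cast_mul, ← Units.val_mul, Int.units_mul_self,
    Units.val_one, Int.cast_one, one_mul]

section OrderIsoOfFin

variable {α β : Type*} [LinearOrder α] [LinearOrder β] {s : Finset α} {u : Finset β} {t : ℕ}
  {hs : s.card = t} {hu : u.card = t} {f : α → β}

theorem Finset.apply_mem_of_apply_orderIsoOfFin
    (hf : ∀ r, f (s.orderIsoOfFin hs r) = u.orderIsoOfFin hu r) {x : α} (hx : x ∈ s) :
    f x ∈ u := by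
  have h := hf ((s.orderIsoOfFin hs).symm ⟨x, hx⟩)
  rw [OrderIso.apply_symm_apply] at h
  exact h ▸ coe_mem _

theorem Finset.orderIsoOfFin_symm_apply_of_apply_orderIsoOfFin
    (hf : ∀ r, f (s.orderIsoOfFin hs r) = u.orderIsoOfFin hu r) {x : α} (hx : x ∈ s) :
    (u.orderIsoOfFin hu).symm ⟨f x, apply_mem_of_apply_orderIsoOfFin hf hx⟩ =
      (s.orderIsoOfFin hs).symm ⟨x, hx⟩ := by
  rw [OrderIso.symm_apply_eq, Subtype.ext_iff, ← hf, OrderIso.apply_symm_apply]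

end OrderIsoOfFin

section PermBlockMatrix

variable {ι R : Type*} [LinearOrder ι] [CommRing R] {t : ℕ} {J K : Finset ι}
  (hJ : J.card = t) (hK : K.card = t) (π : {x // x ∉ J} ≃ {x // x ∉ K})
  (τ : Equiv.Perm (Fin t)) (ψ : Matrix (Fin t) (Fin t) R)

-- The matrix `φ` of the statement.
def permBlockMatrix : Matrix ι ι R :=
  Matrix.of fun j k =>
    if hj : j ∈ J then
      (if hk : k ∈ K then
        ψ (τ ((J.orderIsoOfFin hJ).symm ⟨j, hj⟩)) ((K.orderIsoOfFin hK).symm ⟨k, hk⟩)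
      else 0)
    else -(if ((π ⟨j, hj⟩ : {x // x ∉ K}) : ι) = k then (1 : R) else 0)

variable {ρ : Equiv.Perm ι}

theorem permBlockMatrix_apply_of_notMem_of_mem {j k : ι} (hj : j ∉ J) (hk : k ∈ K) :
    permBlockMatrix hJ hK π τ ψ j k = 0 := by
  simp only [permBlockMatrix, of_apply, dif_neg hj, neg_eq_zero, ite_eq_right_iff]
  exact fun h => absurd (h ▸ hk) (π ⟨j, hj⟩).2

theorem toSquareBlockProp_mem_permBlockMatrix_submatrix
    (hρ : ∀ r, ρ (J.orderIsoOfFin hJ r) = K.orderIsoOfFin hK r) :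
    ((permBlockMatrix hJ hK π τ ψ).submatrix id ρ).toSquareBlockProp (· ∈ J) =
      (ψ.submatrix τ id).submatrix (J.orderIsoOfFin hJ).symm.toEquiv
        (J.orderIsoOfFin hJ).symm.toEquiv := by
  ext j k
  simp [toSquareBlockProp, toBlock, permBlockMatrix, j.2,
    Finset.apply_mem_of_apply_orderIsoOfFin hρ k.2,
    Finset.orderIsoOfFin_symm_apply_of_apply_orderIsoOfFin hρ k.2]

theorem toSquareBlockProp_notMem_permBlockMatrix_submatrix
    (hρ : ∀ j (hj : j ∉ J), ρ j = π ⟨j, hj⟩) :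
    ((permBlockMatrix hJ hK π τ ψ).submatrix id ρ).toSquareBlockProp (· ∉ J) = -1 := by
  ext j k
  simp [toSquareBlockProp, toBlock, permBlockMatrix, j.2, hρ k k.2, one_apply, Subtype.val_inj]

theorem det_permBlockMatrix [Fintype ι]
    (hρJ : ∀ r, ρ (J.orderIsoOfFin hJ r) = K.orderIsoOfFin hK r)
    (hρJc : ∀ j (hj : j ∉ J), ρ j = π ⟨j, hj⟩) :
    (permBlockMatrix hJ hK π τ ψ).det =
      (-1) ^ (Fintype.card ι - t) * Equiv.Perm.sign ρ * Equiv.Perm.sign τ * ψ.det := by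
  have hblock : ∀ j, j ∉ J → ∀ k, k ∈ J →
      (permBlockMatrix hJ hK π τ ψ).submatrix id ρ j k = 0 :=
    fun j hj k hk => permBlockMatrix_apply_of_notMem_of_mem hJ hK π τ ψ hj
      (Finset.apply_mem_of_apply_orderIsoOfFin hρJ hk)
  have hcard : Fintype.card {x // x ∉ J} = Fintype.card ι - t := by
    rw [Fintype.card_subtype_compl, Fintype.card_coe, hJ]
  rw [det_eq_sign_mul_det_submatrix_id ρ, twoBlockTriangular_det _ _ hblock,
    toSquareBlockProp_mem_permBlockMatrix_submatrix hJ hK π τ ψ hρJ,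
    toSquareBlockProp_notMem_permBlockMatrix_submatrix hJ hK π τ ψ hρJc,
    det_neg, det_one, hcard]
  simp only [det_submatrix_equiv_self, det_permute]
  ring

end PermBlockMatrix

theorem statement19 (n t : ℕ) (J K : Finset (Fin n))
    (hJ : J.card = t) (hK : K.card = t)
    (π : {x : Fin n // x ∉ J} ≃ {x : Fin n // x ∉ K})
    (τ : Equiv.Perm (Fin t)) (ψ : Matrix (Fin t) (Fin t) ℂ)
    (ρ : Equiv.Perm (Fin n))
    (hρ1 : ∀ rr : Fin t, ρ ((J.orderIsoOfFin hJ rr : {x // x ∈ J}) : Fin n) =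
      ((K.orderIsoOfFin hK rr : {x // x ∈ K}) : Fin n))
    (hρ2 : ∀ (j : Fin n) (h : j ∉ J), ρ j = ((π ⟨j, h⟩ : {x // x ∉ K}) : Fin n)) :
    Matrix.det (Matrix.of fun j k : Fin n =>
      if hj : j ∈ J then
        (if hk : k ∈ K then
          ψ (τ ((J.orderIsoOfFin hJ).symm ⟨j, hj⟩)) ((K.orderIsoOfFin hK).symm ⟨k, hk⟩)
        else 0)
      else -(if ((π ⟨j, hj⟩ : {x // x ∉ K}) : Fin n) = k then (1 : ℂ) else 0)) =
    (-1) ^ (n - t) * ((Equiv.Perm.sign ρ : ℤ) : ℂ) * ((Equiv.Perm.sign τ : ℤ) : ℂ) *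
      ψ.det := by
  have h := det_permBlockMatrix hJ hK π τ ψ hρ1 hρ2
  rw [Fintype.card_fin] at h
  exact h
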